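/- Fix α ∈ (0,1) and set G(α) = ∫₀^∞ t^α e^{−t} dt. Define ρ : (0,∞) → ℝ by ρ(z) = (G(α) ∫₀^∞ w^{−α}(1+w)^{−1} dw)^{−1} z^{α−1} ∫₀^1 α s^{α−1} e^{−(1−s)z} ds. Then ρ is a probability density, i.e. ∫₀^∞ ρ(z) dz = 1, and its Laplace transform is the arcsine distribution function: ∫₀^∞ e^{−θz} ρ(z) dz = Λ⁰(θ) for every θ > 0. -/

import Mathlib

open MeasureTheory Set Real

/-- The distribution function of the generalized arcsine law with parameter `α`. -/
noncomputable def arcsineCDF (α u : ℝ) : ℝ :=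
  (Real.sin (Real.pi * α) / Real.pi) *
    ∫ s in Set.Ioo (u / (1 + u)) 1, s ^ (-α) * (1 - s) ^ (α - 1)

/-- `G(α) = ∫₀^∞ t^α e^{-t} dt`. -/
noncomputable def Gfun (α : ℝ) : ℝ := ∫ t in Set.Ioi (0:ℝ), t ^ α * Real.exp (-t)

/-- The density `ρ` of the paper (Remark 5.25). -/
noncomputable def rhoFun (α z : ℝ) : ℝ :=
  (Gfun α * ∫ w in Set.Ioi (0:ℝ), w ^ (-α) * (1 + w)⁻¹)⁻¹ *
    (z ^ (α - 1) * ∫ s in Set.Ioo (0:ℝ) 1, α * s ^ (α - 1) * Real.exp (-(1 - s) * z))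

/-!
By Fubini and `∫₀^∞ z^(α-1) e^(-cz) dz = Γ(α) c^(-α)`, the Laplace transform of the
unnormalised density at `θ ≥ 0` is `Γ(α+1) ∫₀¹ s^(α-1) (θ+1-s)^(-α) ds`, and the substitution
`s = (1+θ)(1-u)` turns this into `Γ(α+1) ∫_{θ/(1+θ)}^1 u^(-α) (1-u)^(α-1) du`. The substitution
`w = t/(1-t)` identifies the normalising constant with `Γ(α+1) B(1-α, α) = Γ(α+1) π / sin(πα)`,
so the transform is `Λ⁰(θ)`; its value `Λ⁰(0) = 1` at `θ = 0` is the total mass.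
-/

lemma ofReal_rpow_mul_one_sub_rpow {x : ℝ} (hx : x ∈ Icc 0 1) (a b : ℝ) :
    ((x ^ (a - 1) * (1 - x) ^ (b - 1) : ℝ) : ℂ)
      = (x : ℂ) ^ ((a : ℂ) - 1) * (1 - (x : ℂ)) ^ ((b : ℂ) - 1) := by
  rw [Complex.ofReal_mul, Complex.ofReal_cpow hx.1, Complex.ofReal_cpow (sub_nonneg.2 hx.2)]
  push_cast
  rfl

lemma integral_rpow_mul_one_sub_rpow_ofReal (a b : ℝ) :
    ((∫ s in Ioo (0:ℝ) 1, s ^ (a - 1) * (1 - s) ^ (b - 1) : ℝ) : ℂ)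
      = Complex.betaIntegral a b := by
  rw [Complex.betaIntegral, intervalIntegral.integral_of_le zero_le_one,
    integral_Ioc_eq_integral_Ioo, ← integral_complex_ofReal]
  exact setIntegral_congr_fun measurableSet_Ioo fun x hx ↦
    ofReal_rpow_mul_one_sub_rpow (Ioo_subset_Icc_self hx) a b

lemma integrableOn_rpow_mul_one_sub_rpow {a b : ℝ} (ha : 0 < a) (hb : 0 < b) :
    IntegrableOn (fun s : ℝ ↦ s ^ (a - 1) * (1 - s) ^ (b - 1)) (Ioo 0 1) := by
  have h := Complex.betaIntegral_convergent (u := a) (v := b) (by simpa) (by simpa)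
  rw [intervalIntegrable_iff_integrableOn_Ioc_of_le zero_le_one] at h
  refine IntegrableOn.congr_fun (h.mono_set Ioo_subset_Ioc_self).re (fun x hx ↦ ?_)
    measurableSet_Ioo
  rw [← ofReal_rpow_mul_one_sub_rpow (Ioo_subset_Icc_self hx)]
  exact Complex.ofReal_re _

lemma integral_rpow_mul_one_sub_rpow {a b : ℝ} (ha : 0 < a) (hb : 0 < b) :
    ∫ s in Ioo (0:ℝ) 1, s ^ (a - 1) * (1 - s) ^ (b - 1)
      = Gamma a * Gamma b / Gamma (a + b) := by
  have h := Complex.Gamma_mul_Gamma_eq_betaIntegral (s := a) (t := b) (by simpa) (by simpa)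
  rw [← integral_rpow_mul_one_sub_rpow_ofReal, ← Complex.ofReal_add, Complex.Gamma_ofReal,
    Complex.Gamma_ofReal, Complex.Gamma_ofReal] at h
  rw [eq_div_iff (Gamma_pos_of_pos (add_pos ha hb)).ne', mul_comm]
  exact_mod_cast h.symm

lemma integral_rpow_neg_mul_one_sub_rpow {α : ℝ} (hα0 : 0 < α) (hα1 : α < 1) :
    ∫ s in Ioo (0:ℝ) 1, s ^ (-α) * (1 - s) ^ (α - 1) = π / sin (π * α) := by
  have h := integral_rpow_mul_one_sub_rpow (sub_pos.2 hα1) hα0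
  rw [sub_sub_cancel_left, sub_add_cancel, Gamma_one, div_one, mul_comm] at h
  rw [h, Gamma_mul_Gamma_one_sub]

lemma arcsineCDF_zero {α : ℝ} (hα0 : 0 < α) (hα1 : α < 1) : arcsineCDF α 0 = 1 := by
  have hsin : 0 < sin (π * α) :=
    sin_pos_of_pos_of_lt_pi (by positivity) (mul_lt_of_lt_one_right pi_pos hα1)
  rw [arcsineCDF, zero_div, integral_rpow_neg_mul_one_sub_rpow hα0 hα1]
  field_simp

lemma Gfun_eq_Gamma {α : ℝ} (hα : -1 < α) : Gfun α = Gamma (α + 1) := by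
  rw [Gfun, Gamma_eq_integral (by linarith), add_sub_cancel_right]
  simp_rw [mul_comm]

lemma integral_Ioi_rpow_neg_mul_one_add_inv (α : ℝ) :
    ∫ w in Ioi (0:ℝ), w ^ (-α) * (1 + w)⁻¹
      = ∫ s in Ioo (0:ℝ) 1, s ^ (-α) * (1 - s) ^ (α - 1) := by
  have himage : (fun t : ℝ ↦ t / (1 - t)) '' Ioo 0 1 = Ioi 0 := by
    ext w
    constructor
    · rintro ⟨t, ⟨ht0, ht1⟩, rfl⟩
      exact div_pos ht0 (sub_pos.2 ht1)
    · intro (hw : 0 < w)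
      refine ⟨w / (1 + w), ⟨by positivity, (div_lt_one (by positivity)).2 (by linarith)⟩, ?_⟩
      field_simp
      ring
  have hderiv : ∀ t ∈ Ioo (0:ℝ) 1,
      HasDerivWithinAt (fun t : ℝ ↦ t / (1 - t)) ((1 - t) ^ 2)⁻¹ (Ioo 0 1) t := by
    intro t ht
    have hne : 1 - t ≠ 0 := (sub_pos.2 ht.2).ne'
    have h := (hasDerivAt_id' t).div ((hasDerivAt_id' t).const_sub 1) hne
    exact (h.congr_deriv (by ring)).hasDerivWithinAt
  have hinj : InjOn (fun t : ℝ ↦ t / (1 - t)) (Ioo 0 1) := by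
    intro a ha b hb hab
    have h1 : 1 - a ≠ 0 := (sub_pos.2 ha.2).ne'
    have h2 : 1 - b ≠ 0 := (sub_pos.2 hb.2).ne'
    field_simp at hab
    linarith
  rw [← himage, integral_image_eq_integral_abs_deriv_smul measurableSet_Ioo hderiv hinj]
  refine setIntegral_congr_fun measurableSet_Ioo fun t ⟨ht0, ht1⟩ ↦ ?_
  have ht1' : 0 < 1 - t := sub_pos.2 ht1
  have hinv : (1 + t / (1 - t))⁻¹ = 1 - t := by
    field_simp
    ring
  rw [smul_eq_mul, hinv, div_rpow ht0.le ht1'.le, abs_of_pos (by positivity), rpow_neg ht1'.le,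
    rpow_sub ht1', rpow_one]
  field_simp

lemma integral_Ioo_rpow_mul_add_one_sub_rpow_neg (α : ℝ) {θ : ℝ} (hθ : 0 ≤ θ) :
    ∫ s in Ioo (0:ℝ) 1, s ^ (α - 1) * (θ + 1 - s) ^ (-α)
      = ∫ u in Ioo (θ / (1 + θ)) 1, u ^ (-α) * (1 - u) ^ (α - 1) := by
  have hθ' : 0 < 1 + θ := by linarith
  have himage : (fun u : ℝ ↦ (1 + θ) * (1 - u)) '' Ioo (θ / (1 + θ)) 1 = Ioo 0 1 := by
    ext x
    constructor
    · rintro ⟨u, ⟨hu0, hu1⟩, rfl⟩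
      rw [div_lt_iff₀ hθ'] at hu0
      exact ⟨by nlinarith, by nlinarith⟩
    · rintro ⟨hx0, hx1⟩
      refine ⟨1 - x / (1 + θ), ⟨?_, by linarith [div_pos hx0 hθ']⟩, by field_simp; ring⟩
      rw [lt_sub_iff_add_lt, ← add_div, div_lt_one hθ']
      linarith
  have hderiv : ∀ u ∈ Ioo (θ / (1 + θ)) 1,
      HasDerivWithinAt (fun u : ℝ ↦ (1 + θ) * (1 - u)) (-(1 + θ)) (Ioo (θ / (1 + θ)) 1) u :=
    fun u _ ↦ by simpa using (((hasDerivAt_id u).const_sub 1).const_mul (1 + θ)).hasDerivWithinAt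
  have hinj : InjOn (fun u : ℝ ↦ (1 + θ) * (1 - u)) (Ioo (θ / (1 + θ)) 1) :=
    fun a _ b _ hab ↦ by simpa using mul_left_cancel₀ hθ'.ne' hab
  rw [← himage, integral_image_eq_integral_abs_deriv_smul measurableSet_Ioo hderiv hinj]
  refine setIntegral_congr_fun measurableSet_Ioo fun u ⟨hu0, hu1⟩ ↦ ?_
  have hu0 : 0 < u := (div_nonneg hθ hθ'.le).trans_lt hu0
  have hu1 : 0 < 1 - u := sub_pos.2 hu1
  have hpow : (1 + θ) * ((1 + θ) ^ (α - 1) * (1 + θ) ^ (-α)) = 1 := by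
    rw [← rpow_add hθ', show α - 1 + -α = -1 by ring, rpow_neg_one, mul_inv_cancel₀ hθ'.ne']
  rw [smul_eq_mul, show θ + 1 - (1 + θ) * (1 - u) = (1 + θ) * u by ring, abs_neg,
    abs_of_pos hθ', mul_rpow hθ'.le hu1.le, mul_rpow hθ'.le hu0.le]
  linear_combination ((1 - u) ^ (α - 1) * u ^ (-α)) * hpow

lemma integrableOn_rpow_mul_add_one_sub_rpow_neg {α θ : ℝ} (hα0 : 0 < α) (hα1 : α < 1)
    (hθ : 0 ≤ θ) : IntegrableOn (fun s : ℝ ↦ s ^ (α - 1) * (θ + 1 - s) ^ (-α)) (Ioo 0 1) := by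
  have hbeta := integrableOn_rpow_mul_one_sub_rpow hα0 (sub_pos.2 hα1)
  rw [sub_sub_cancel_left] at hbeta
  refine hbeta.mono' (by fun_prop) ?_
  filter_upwards [ae_restrict_mem measurableSet_Ioo] with s ⟨hs0, hs1⟩
  have hs1 : 0 < 1 - s := sub_pos.2 hs1
  have hc : 0 < θ + 1 - s := by linarith
  rw [norm_of_nonneg (by positivity)]
  exact mul_le_mul_of_nonneg_left (rpow_le_rpow_of_nonpos hs1 (by linarith) (by linarith))
    (by positivity)

noncomputable def rhoKernel (α z : ℝ) : ℝ :=
  z ^ (α - 1) * ∫ s in Ioo (0:ℝ) 1, α * s ^ (α - 1) * exp (-(1 - s) * z)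

lemma integral_exp_neg_mul_rhoKernel {α θ : ℝ} (hα0 : 0 < α) (hα1 : α < 1) (hθ : 0 ≤ θ) :
    ∫ z in Ioi (0:ℝ), exp (-θ * z) * rhoKernel α z
      = Gamma (α + 1) * ∫ s in Ioo (0:ℝ) 1, s ^ (α - 1) * (θ + 1 - s) ^ (-α) := by
  set F : ℝ → ℝ → ℝ := fun z s ↦ α * s ^ (α - 1) * (z ^ (α - 1) * exp (-((θ + 1 - s) * z)))
  have hinner : ∀ s ∈ Ioo (0:ℝ) 1,
      ∫ z in Ioi (0:ℝ), F z s = Gamma (α + 1) * (s ^ (α - 1) * (θ + 1 - s) ^ (-α)) := by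
    intro s ⟨_, hs1⟩
    have hc : 0 < θ + 1 - s := by linarith
    rw [integral_const_mul, integral_rpow_mul_exp_neg_mul_Ioi hα0 hc, one_div, inv_rpow hc.le,
      ← rpow_neg hc.le, Gamma_add_one hα0.ne']
    ring
  have hint : Integrable (Function.uncurry F)
      ((volume.restrict (Ioi 0)).prod (volume.restrict (Ioo 0 1))) := by
    rw [integrable_prod_iff' (by fun_prop)]
    constructor
    · filter_upwards [ae_restrict_mem measurableSet_Ioo] with s hs
      have hs0 : 0 < s := hs.1
      have hc : 0 < θ + 1 - s := by linarith [hs.2]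
      refine Integrable.of_integral_ne_zero ?_
      simp only [Function.uncurry_apply_pair, hinner s hs]
      positivity
    · refine IntegrableOn.congr_fun
        ((integrableOn_rpow_mul_add_one_sub_rpow_neg hα0 hα1 hθ).const_mul (Gamma (α + 1)))
        (fun s hs ↦ ?_) measurableSet_Ioo
      have hs0 : 0 < s := hs.1
      rw [← hinner s hs]
      refine setIntegral_congr_fun measurableSet_Ioi fun z (hz : 0 < z) ↦ ?_
      exact (norm_of_nonneg (by positivity)).symm
  have hfactor : ∀ z, exp (-θ * z) * rhoKernel α z = ∫ s in Ioo (0:ℝ) 1, F z s := fun z ↦ by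
    rw [rhoKernel, ← integral_const_mul, ← integral_const_mul]
    congr 1 with s
    simp only [F]
    rw [show -((θ + 1 - s) * z) = -θ * z + -(1 - s) * z by ring, exp_add]
    ring
  simp_rw [hfactor]
  rw [integral_integral_swap hint, setIntegral_congr_fun measurableSet_Ioo hinner,
    integral_const_mul]

lemma integral_exp_neg_mul_rhoFun {α θ : ℝ} (hα0 : 0 < α) (hα1 : α < 1) (hθ : 0 ≤ θ) :
    ∫ z in Ioi (0:ℝ), exp (-θ * z) * rhoFun α z = arcsineCDF α θ := by
  have hsin : 0 < sin (π * α) :=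
    sin_pos_of_pos_of_lt_pi (by positivity) (mul_lt_of_lt_one_right pi_pos hα1)
  have hnorm : Gfun α * ∫ w in Ioi (0:ℝ), w ^ (-α) * (1 + w)⁻¹
      = Gamma (α + 1) * (π / sin (π * α)) := by
    rw [Gfun_eq_Gamma (by linarith), integral_Ioi_rpow_neg_mul_one_add_inv,
      integral_rpow_neg_mul_one_sub_rpow hα0 hα1]
  have hrho : ∀ z, exp (-θ * z) * rhoFun α z
      = (Gamma (α + 1) * (π / sin (π * α)))⁻¹ * (exp (-θ * z) * rhoKernel α z) := fun z ↦ by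
    rw [rhoFun, hnorm, rhoKernel]
    ring
  simp_rw [hrho]
  rw [integral_const_mul, integral_exp_neg_mul_rhoKernel hα0 hα1 hθ,
    integral_Ioo_rpow_mul_add_one_sub_rpow_neg α hθ, arcsineCDF]
  field_simp

/-- `ρ` is a probability density on `(0,∞)` whose Laplace transform is the
arcsine distribution function `Λ⁰`. -/
theorem stmt_18 (α : ℝ) (hα : α ∈ Set.Ioo (0:ℝ) 1) :
    (∫ z in Set.Ioi (0:ℝ), rhoFun α z) = 1 ∧
    ∀ θ : ℝ, 0 < θ →
      (∫ z in Set.Ioi (0:ℝ), Real.exp (-θ * z) * rhoFun α z) = arcsineCDF α θ := by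
  obtain ⟨hα0, hα1⟩ := hα
  refine ⟨?_, fun θ hθ ↦ integral_exp_neg_mul_rhoFun hα0 hα1 hθ.le⟩
  simpa [arcsineCDF_zero hα0 hα1] using integral_exp_neg_mul_rhoFun hα0 hα1 le_rfl
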